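/- (Mean ergodic theorem for amenable group actions.) Let Γ be a countable amenable group with a left Følner sequence (F_n)_{n≥1}, and let (X, μ, Γ) be an ergodic measure-preserving Γ-system. Then for every f ∈ L²(X, μ), the averages (1/|F_n|) Σ_{g∈F_n} f(g·x) converge in L²(X, μ) to the constant ∫ f dμ as n → ∞. -/

import Mathlib

/-!
Von Neumann's argument. Let `Γ` act on `L²(μ)` by the Koopman isometries `f ↦ f (g • ·)`. A vector
orthogonal to every coboundary `g • v - v` is invariant, so `L²` is the sum of the invariant
vectors and the closure of the span of the coboundaries. Følner averages fix invariant vectors and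
send coboundaries to `0`, since the sum over `F` of `t • (g • v - v)` telescopes to a sum over
`F ∆ F g`; being contractions, they also send the closure to `0`. Hence the averages converge to the
orthogonal projection onto the invariant vectors, which by ergodicity are the constants, and the
projection of `f` onto the constants is `∫ f`.
-/

open Pointwise Filter MeasureTheory

def IsLeftFolner {Γ : Type*} [Group Γ] [DecidableEq Γ] (F : ℕ → Finset Γ) : Prop :=
  (∀ n, (F n).Nonempty) ∧
    ∀ g : Γ, Tendsto (fun n => ((symmDiff (F n) ((F n).image (g * ·))).card : ℝ) / (F n).card)
      atTop (nhds 0)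

open Finset Topology
open scoped ENNReal InnerProductSpace

def IsRightFolner {G : Type*} [Group G] [DecidableEq G] (F : ℕ → Finset G) : Prop :=
  (∀ n, (F n).Nonempty) ∧
    ∀ g : G, Tendsto (fun n => ((symmDiff (F n) ((F n).image (· * g))).card : ℝ) / (F n).card)
      atTop (𝓝 0)

-- `DomMulAct.mk (g * h) = DomMulAct.mk h * DomMulAct.mk g`, so left and right translates swap.
theorem IsLeftFolner.isRightFolner_map_domMulAct {Γ : Type*} [Group Γ] [DecidableEq Γ]
    [DecidableEq Γᵈᵐᵃ] {F : ℕ → Finset Γ} (hF : IsLeftFolner F) :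
    IsRightFolner fun n => (F n).map DomMulAct.mk.toEmbedding := by
  refine ⟨fun n => (hF.1 n).map, fun g => ?_⟩
  have hcard : ∀ s : Finset Γ, #(symmDiff (s.map DomMulAct.mk.toEmbedding)
      ((s.map DomMulAct.mk.toEmbedding).image (· * g))) =
      #(symmDiff s (s.image (DomMulAct.mk.symm g * ·))) := by
    intro s
    have hmul : (s.map DomMulAct.mk.toEmbedding).image (· * g) =
        (s.image (DomMulAct.mk.symm g * ·)).image DomMulAct.mk := by
      simp only [map_eq_image, image_image, Equiv.coe_toEmbedding]
      rfl
    rw [hmul, map_eq_image, Equiv.coe_toEmbedding, ← image_symmDiff _ _ DomMulAct.mk.injective,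
      card_image_of_injective _ DomMulAct.mk.injective]
  simpa only [hcard, card_map] using hF.2 (DomMulAct.mk.symm g)

section OrbitAverage

variable (𝕜 G E : Type*) [Semifield 𝕜] [Monoid G] [AddCommMonoid E] [Module 𝕜 E]
  [DistribMulAction G E] [SMulCommClass G 𝕜 E]

def fixedPointsSubmodule : Submodule 𝕜 E where
  carrier := MulAction.fixedPoints G E
  add_mem' ha hb g := by rw [smul_add, ha g, hb g]
  zero_mem' g := smul_zero g
  smul_mem' c _ ha g := by rw [smul_comm, ha g]

variable {G}

def orbitAverage (s : Finset G) : E →ₗ[𝕜] E :=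
  (#s : 𝕜)⁻¹ • ∑ g ∈ s, DistribSMul.toLinearMap 𝕜 E g

variable {𝕜 E}

theorem orbitAverage_apply (s : Finset G) (v : E) :
    orbitAverage 𝕜 E s v = (#s : 𝕜)⁻¹ • ∑ g ∈ s, g • v := by
  simp [orbitAverage]

theorem orbitAverage_eq_self [CharZero 𝕜] {s : Finset G} (hs : s.Nonempty) {v : E}
    (hv : v ∈ fixedPointsSubmodule 𝕜 G E) : orbitAverage 𝕜 E s v = v := by
  rw [orbitAverage_apply, sum_congr rfl fun g _ => hv g, sum_const, ← Nat.cast_smul_eq_nsmul 𝕜,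
    inv_smul_smul₀ (Nat.cast_ne_zero.2 hs.card_ne_zero)]

theorem isClosed_fixedPointsSubmodule [TopologicalSpace E] [T2Space E] [ContinuousConstSMul G E] :
    IsClosed (fixedPointsSubmodule 𝕜 G E : Set E) := by
  simp only [fixedPointsSubmodule, Submodule.coe_set_mk, AddSubmonoid.coe_set_mk,
    AddSubsemigroup.coe_set_mk, MulAction.fixedPoints, Set.ofPred_forall]
  exact isClosed_iInter fun g => isClosed_eq (continuous_const_smul g) continuous_id

instance [UniformSpace E] [CompleteSpace E] [T2Space E] [ContinuousConstSMul G E] :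
    CompleteSpace (fixedPointsSubmodule 𝕜 G E) :=
  isClosed_fixedPointsSubmodule.completeSpace_coe

end OrbitAverage

section Hilbert

variable {𝕜 G E : Type*} [RCLike 𝕜] [Group G] [NormedAddCommGroup E] [InnerProductSpace 𝕜 E]
  [DistribMulAction G E] [SMulCommClass G 𝕜 E] [IsIsometricSMul G E]

theorem norm_smul_of_isIsometricSMul (g : G) (v : E) : ‖g • v‖ = ‖v‖ := by
  simpa only [smul_zero, dist_zero_right] using dist_smul g v (0 : E)

theorem norm_orbitAverage_le (s : Finset G) (v : E) : ‖orbitAverage 𝕜 E s v‖ ≤ ‖v‖ := by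
  rcases s.eq_empty_or_nonempty with rfl | hs
  · simp [orbitAverage_apply]
  calc ‖orbitAverage 𝕜 E s v‖ = (#s : ℝ)⁻¹ * ‖∑ g ∈ s, g • v‖ := by
        rw [orbitAverage_apply, norm_smul, norm_inv, RCLike.norm_natCast]
    _ ≤ (#s : ℝ)⁻¹ * ∑ g ∈ s, ‖g • v‖ := by gcongr; exact norm_sum_le _ _
    _ = ‖v‖ := by
        simp only [norm_smul_of_isIsometricSMul, sum_const, nsmul_eq_mul]
        field_simp

theorem norm_orbitAverage_smul_sub_le [DecidableEq G] (s : Finset G) (g : G) (v : E) :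
    ‖orbitAverage 𝕜 E s (g • v - v)‖ ≤ #(symmDiff s (s.image (· * g))) / #s * ‖v‖ := by
  have hsum : ∑ t ∈ s, t • (g • v - v) = ∑ t ∈ s.image (· * g), t • v - ∑ t ∈ s, t • v := by
    rw [sum_image fun _ _ _ _ => mul_right_cancel, ← sum_sub_distrib]
    simp only [smul_sub, mul_smul]
  have hdiff : ‖∑ t ∈ s, t • (g • v - v)‖ ≤ #(symmDiff s (s.image (· * g))) * ‖v‖ := by
    rw [hsum, ← sum_sdiff_sub_sum_sdiff, symmDiff_def, sup_eq_union,
      card_union_of_disjoint disjoint_sdiff_sdiff]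
    calc _ ≤ ‖∑ t ∈ s.image (· * g) \ s, t • v‖ + ‖∑ t ∈ s \ s.image (· * g), t • v‖ :=
          norm_sub_le _ _
      _ ≤ ∑ t ∈ s.image (· * g) \ s, ‖t • v‖ + ∑ t ∈ s \ s.image (· * g), ‖t • v‖ :=
          add_le_add (norm_sum_le _ _) (norm_sum_le _ _)
      _ = _ := by simp only [norm_smul_of_isIsometricSMul, sum_const, nsmul_eq_mul]; push_cast; ring
  rw [orbitAverage_apply, norm_smul, norm_inv, RCLike.norm_natCast, div_mul_eq_mul_div,
    inv_mul_eq_div]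
  gcongr

theorem tendsto_orbitAverage_smul_sub [DecidableEq G] {F : ℕ → Finset G} (hF : IsRightFolner F)
    (g : G) (v : E) : Tendsto (fun n => orbitAverage 𝕜 E (F n) (g • v - v)) atTop (𝓝 0) := by
  rw [tendsto_zero_iff_norm_tendsto_zero]
  refine squeeze_zero (fun n => norm_nonneg _) (fun n => norm_orbitAverage_smul_sub_le _ g v) ?_
  simpa using (hF.2 g).mul_const ‖v‖

theorem orthogonal_span_smul_sub_le :
    (Submodule.span 𝕜 {w : E | ∃ (g : G) (v : E), g • v - v = w})ᗮ ≤
      fixedPointsSubmodule 𝕜 G E := by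
  intro v hv g
  have horth : ⟪g • v - v, v⟫_𝕜 = 0 := hv _ (Submodule.subset_span ⟨g, v, rfl⟩)
  rw [inner_sub_left, sub_eq_zero] at horth
  -- `‖g • v‖ = ‖v‖` and `⟪g • v, v⟫ = ‖v‖²`, so `‖g • v - v‖² = 0`.
  have : ‖g • v - v‖ ^ 2 = 0 := by
    rw [norm_sub_sq (𝕜 := 𝕜), horth, inner_self_eq_norm_sq, norm_smul_of_isIsometricSMul]
    ring
  simpa [sub_eq_zero] using this

theorem tendsto_zero_of_mem_topologicalClosure_span {ι : Type*} {l : Filter ι}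
    {A : ι → E →ₗ[𝕜] E} (hA : ∀ i v, ‖A i v‖ ≤ ‖v‖) {S : Set E}
    (hS : ∀ v ∈ S, Tendsto (A · v) l (𝓝 0)) {v : E}
    (hv : v ∈ (Submodule.span 𝕜 S).topologicalClosure) : Tendsto (A · v) l (𝓝 0) := by
  have hspan : ∀ v ∈ Submodule.span 𝕜 S, Tendsto (A · v) l (𝓝 0) := by
    intro v hv
    induction hv using Submodule.span_induction with
    | mem v hv => exact hS v hv
    | zero => simpa using tendsto_const_nhds
    | add v w _ _ hv hw => simpa using hv.add hw
    | smul c v _ hv => simpa using hv.const_smul c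
  have hlip : ∀ i, LipschitzWith 1 (A i) := fun i => by
    simpa using AddMonoidHomClass.lipschitz_of_bound (A i) 1 fun v => by simpa using hA i v
  have hclosed : IsClosed {v | Tendsto (A · v) l (𝓝 0)} :=
    (LipschitzWith.uniformEquicontinuous _ 1 hlip).equicontinuous.isClosed_setOfPred_tendsto
      (f := fun _ => 0) continuous_const
  exact closure_minimal hspan hclosed hv

theorem tendsto_orbitAverage_starProjection [CompleteSpace E] [DecidableEq G]
    {F : ℕ → Finset G} (hF : IsRightFolner F) (v : E) :
    Tendsto (fun n => orbitAverage 𝕜 E (F n) v) atTop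
      (𝓝 ((fixedPointsSubmodule 𝕜 G E).starProjection v)) := by
  set K := fixedPointsSubmodule 𝕜 G E
  have hclosure : v - K.starProjection v ∈
      (Submodule.span 𝕜 {w : E | ∃ (g : G) (v : E), g • v - v = w}).topologicalClosure := by
    rw [← Submodule.orthogonal_orthogonal_eq_closure]
    exact Submodule.orthogonal_le orthogonal_span_smul_sub_le
      (K.sub_starProjection_mem_orthogonal v)
  have hcob := tendsto_zero_of_mem_topologicalClosure_span (fun n => norm_orbitAverage_le (F n))
    (by rintro _ ⟨g, w, rfl⟩; exact tendsto_orbitAverage_smul_sub hF g w) hclosure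
  simp only [map_sub, orbitAverage_eq_self (hF.1 _) (K.starProjection_apply_mem v)] at hcob
  exact tendsto_sub_nhds_zero_iff.1 hcob

end Hilbert

theorem ErgodicSMul.of_measure_eq_zero_or_one {Γ X : Type*} [SMul Γ X] [MeasurableSpace X]
    {μ : Measure X} [IsProbabilityMeasure μ]
    (hmp : ∀ g : Γ, MeasurePreserving (fun x => g • x) μ μ)
    (herg : ∀ A : Set X, MeasurableSet A →
      (∀ g : Γ, μ (symmDiff ((fun x => g • x) ⁻¹' A) A) = 0) → μ A = 0 ∨ μ A = 1) :
    ErgodicSMul Γ X μ where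
  measure_preimage_smul g _ hs := (hmp g).measure_preimage hs.nullMeasurableSet
  aeconst_of_forall_preimage_smul_ae_eq {A} hA hinv := by
    rw [eventuallyConst_set, ← measure_eq_zero_iff_ae_notMem,
      ae_mem_iff_measure_eq hA.nullMeasurableSet, measure_univ]
    exact (herg A hA fun g => measure_symmDiff_eq_zero_iff.2 (hinv g)).symm

theorem ae_eq_const_of_forall_comp_smul_ae_eq {Γ X β : Type*} [SMul Γ X] [MeasurableSpace X]
    {μ : Measure X} [ErgodicSMul Γ X μ] [MeasurableSpace β]
    [MeasurableSpace.CountablySeparated β] [Nonempty β] {m : X → β} (hm : Measurable m)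
    (hinv : ∀ g : Γ, (fun x => m (g • x)) =ᵐ[μ] m) : ∃ c, m =ᵐ[μ] Function.const X c :=
  exists_eventuallyEq_const_of_forall_separating MeasurableSet fun U hU =>
    eventuallyConst_set.1 <|
      aeconst_of_forall_preimage_smul_ae_eq Γ (hm hU).nullMeasurableSet fun g => (hinv g).preimage U

namespace MeasureTheory.L2

variable {𝕜 X : Type*} [RCLike 𝕜] [MeasurableSpace X] {μ : Measure X} [IsFiniteMeasure μ]

theorem inner_const_left (c : 𝕜) (f : Lp 𝕜 2 μ) :
    ⟪Lp.const 2 μ c, f⟫_𝕜 = (starRingEnd 𝕜) c * ∫ x, f x ∂μ := by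
  rw [← indicatorConstLp_univ, inner_indicatorConstLp_eq_inner_setIntegral, setIntegral_univ,
    RCLike.inner_apply']

end MeasureTheory.L2

section Koopman

variable {Γ X : Type*} [Monoid Γ] [MulAction Γ X] [MeasurableSpace X] [MeasurableConstSMul Γ X]
  {μ : Measure X}

theorem coeFn_orbitAverage_map_domMulAct [SMulInvariantMeasure Γ X μ] {p : ℝ≥0∞}
    (s : Finset Γ) {f : X → ℝ} (hf : MemLp f p μ) :
    orbitAverage ℝ (Lp ℝ p μ) (s.map DomMulAct.mk.toEmbedding) (hf.toLp f) =ᵐ[μ]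
      fun x => (∑ g ∈ s, f (g • x)) / #s := by
  have hsmul : ∀ g ∈ s, ⇑(DomMulAct.mk g • hf.toLp f) =ᵐ[μ] fun x => f (g • x) := fun g _ => by
    rw [DomMulAct.mk_smul_toLp]
    exact MemLp.coeFn_toLp _
  rw [orbitAverage_apply, sum_map, card_map, Equiv.coe_toEmbedding]
  filter_upwards [Lp.coeFn_smul ((#s : ℝ)⁻¹) (∑ g ∈ s, DomMulAct.mk g • hf.toLp f),
    Lp.coeFn_fun_finsetSum s fun g => DomMulAct.mk g • hf.toLp f,
    (eventually_all_finset s).2 hsmul] with x hx hsum hg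
  rw [hx, Pi.smul_apply, hsum, sum_congr rfl hg, smul_eq_mul, div_eq_inv_mul]

theorem exists_eq_const_of_mem_fixedPointsSubmodule [ErgodicSMul Γ X μ] [IsFiniteMeasure μ]
    {p : ℝ≥0∞} {w : Lp ℝ p μ} (hw : w ∈ fixedPointsSubmodule ℝ Γᵈᵐᵃ (Lp ℝ p μ)) :
    ∃ c, w = Lp.const p μ c := by
  obtain ⟨c, hc⟩ := ae_eq_const_of_forall_comp_smul_ae_eq (Γ := Γ)
    (Lp.stronglyMeasurable w).measurable fun g => by
      simpa [hw (DomMulAct.mk g)] using (DomMulAct.smul_Lp_ae_eq (DomMulAct.mk g) w).symm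
  exact ⟨c, Lp.ext (hc.trans (Lp.coeFn_const ..).symm)⟩

theorem starProjection_fixedPointsSubmodule [ErgodicSMul Γ X μ] [IsProbabilityMeasure μ]
    (f : Lp ℝ 2 μ) :
    (fixedPointsSubmodule ℝ Γᵈᵐᵃ (Lp ℝ 2 μ)).starProjection f = Lp.const 2 μ (∫ x, f x ∂μ) := by
  have hconst : ∀ c : ℝ, ∫ x, Lp.const 2 μ c x ∂μ = c := fun c => by
    rw [integral_congr_ae (Lp.coeFn_const ..)]
    simp
  have hmem : Lp.const 2 μ (∫ x, f x ∂μ) ∈ fixedPointsSubmodule ℝ Γᵈᵐᵃ (Lp ℝ 2 μ) :=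
    fun g => DomMulAct.smul_Lp_const g _
  refine Submodule.eq_starProjection_of_mem_of_inner_eq_zero hmem fun w hw => ?_
  obtain ⟨c, rfl⟩ := exists_eq_const_of_mem_fixedPointsSubmodule hw
  rw [real_inner_comm, inner_sub_right, L2.inner_const_left, L2.inner_const_left, hconst, sub_self]

end Koopman

theorem mean_ergodic_theorem_general
    {Γ : Type*} [Group Γ] [DecidableEq Γ]
    {X : Type*} [MeasurableSpace X] (μ : Measure X) [IsProbabilityMeasure μ]
    [MulAction Γ X]
    (hmp : ∀ g : Γ, MeasurePreserving (fun x => g • x) μ μ)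
    (herg : ∀ A : Set X, MeasurableSet A →
      (∀ g : Γ, μ (symmDiff ((fun x => g • x) ⁻¹' A) A) = 0) → μ A = 0 ∨ μ A = 1)
    (F : ℕ → Finset Γ) (hF : IsLeftFolner F)
    (f : X → ℝ) (hf : MemLp f 2 μ) :
    Tendsto (fun n =>
        eLpNorm (fun x => (∑ g ∈ F n, f (g • x)) / (F n).card - ∫ y, f y ∂μ) 2 μ)
      atTop (nhds 0) := by
  classical
  have : MeasurableConstSMul Γ X := ⟨fun g => (hmp g).measurable⟩
  have : ErgodicSMul Γ X μ := .of_measure_eq_zero_or_one hmp herg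
  have hlim := tendsto_orbitAverage_starProjection (𝕜 := ℝ) hF.isRightFolner_map_domMulAct
    (hf.toLp f)
  rw [starProjection_fixedPointsSubmodule, tendsto_iff_edist_tendsto_0,
    integral_congr_ae hf.coeFn_toLp] at hlim
  refine hlim.congr fun n => ?_
  rw [Lp.edist_def]
  refine eLpNorm_congr_ae ?_
  filter_upwards [coeFn_orbitAverage_map_domMulAct (F n) hf,
    Lp.coeFn_const (p := 2) (μ := μ) (∫ y, f y ∂μ)] with x hx hc
  rw [Pi.sub_apply, hx, hc, Function.const_apply]

/-- Mean ergodic theorem for amenable group actions: if `Γ` is a countable amenable group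
with a left Følner sequence `(F n)` acting ergodically by measure-preserving
transformations on a probability space `(X, μ)`, then for every `f ∈ L²(X, μ)` the
averages `(1/|F n|) Σ_{g ∈ F n} f (g • x)` converge in `L²(X, μ)` to the constant
`∫ f dμ`. -/
theorem mean_ergodic_theorem
    {Γ : Type*} [Group Γ] [Countable Γ] [DecidableEq Γ]
    {X : Type*} [MeasurableSpace X] (μ : Measure X) [IsProbabilityMeasure μ]
    [MulAction Γ X]
    (hmp : ∀ g : Γ, MeasurePreserving (fun x => g • x) μ μ)
    (herg : ∀ A : Set X, MeasurableSet A →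
      (∀ g : Γ, μ (symmDiff ((fun x => g • x) ⁻¹' A) A) = 0) → μ A = 0 ∨ μ A = 1)
    (F : ℕ → Finset Γ) (hF : IsLeftFolner F)
    (f : X → ℝ) (hf : MemLp f 2 μ) :
    Tendsto (fun n =>
        eLpNorm (fun x => (∑ g ∈ F n, f (g • x)) / (F n).card - ∫ y, f y ∂μ) 2 μ)
      atTop (nhds 0) :=
  mean_ergodic_theorem_general μ hmp herg F hF f hf
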